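/- (Key estimate in the proof of the Feinstein lemma.) Let σ and Q be positive semidefinite operators and P, Π orthogonal projections on a finite-dimensional complex Hilbert space. Suppose Q ≤ P, QP = PQ, and P σ P ≤ c·1 for some real c ≥ 0. Then Tr[ σ (P − Q)^{1/2} P Π P (P − Q)^{1/2} ] ≤ c · Tr(Π). -/

import Mathlib

open Matrix Filter
open scoped BigOperators ComplexOrder

noncomputable section

/-- Operators on the `n`-fold tensor power of a `d`-dimensional Hilbert space. -/
abbrev MatPow (d n : ℕ) := Matrix (Fin n → Fin d) (Fin n → Fin d) ℂ

/-- A density matrix: positive semidefinite with unit trace. -/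
def IsDensity {m : Type*} [Fintype m] (ρ : Matrix m m ℂ) : Prop :=
  ρ.PosSemidef ∧ ρ.trace = 1

/-- Loewner order `A ≤ B`. -/
def Loewner {m : Type*} [Fintype m] (A B : Matrix m m ℂ) : Prop := (B - A).PosSemidef

/-- An orthogonal projection. -/
def IsProjection {m : Type*} [Fintype m] (P : Matrix m m ℂ) : Prop :=
  P.IsHermitian ∧ P * P = P

/-- Positive semidefinite square root (zero on non-PSD input). -/
def psqrt {m : Type*} [Fintype m] [DecidableEq m] (A : Matrix m m ℂ) : Matrix m m ℂ :=
  letI := Classical.propDecidable A.PosSemidef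
  if h : A.PosSemidef then
    h.1.eigenvectorUnitary.1 * diagonal ((↑) ∘ (√·) ∘ h.1.eigenvalues) *
      (star h.1.eigenvectorUnitary : Matrix m m ℂ) else 0

/-- Fidelity `F(A,B) = Tr √(√A B √A)` of positive semidefinite operators. -/
def fidelity {m : Type*} [Fintype m] [DecidableEq m] (A B : Matrix m m ℂ) : ℝ :=
  ((psqrt (psqrt A * B * psqrt A)).trace).re

/-- The trace norm `Tr |A| = Tr √(Aᴴ A)`. -/
def traceNorm {m : Type*} [Fintype m] [DecidableEq m] (A : Matrix m m ℂ) : ℝ :=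
  ((psqrt (Aᴴ * A)).trace).re

/-- Von Neumann entropy `S(ρ) = -Tr(ρ log₂ ρ)` (via eigenvalues, base-2 logarithm). -/
def vnEntropy {m : Type*} [Fintype m] [DecidableEq m] (ρ : Matrix m m ℂ) : ℝ :=
  if h : ρ.IsHermitian then -∑ i, h.eigenvalues i * Real.logb 2 (h.eigenvalues i) else 0

/-- Linear maps from operators on an `a`-dimensional space to operators on a
`b`-dimensional space. -/
abbrev QChannelMap (a b : ℕ) := Matrix (Fin a) (Fin a) ℂ →ₗ[ℂ] Matrix (Fin b) (Fin b) ℂ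

/-- The Choi matrix of a linear map. -/
def choiMatrix {a b : ℕ} (Φ : QChannelMap a b) : Matrix (Fin a × Fin b) (Fin a × Fin b) ℂ :=
  Matrix.of fun p p' => Φ (Matrix.single p.1 p'.1 1) p.2 p'.2

/-- Completely positive (positive semidefinite Choi matrix) and trace preserving. -/
def IsCPTP {a b : ℕ} (Φ : QChannelMap a b) : Prop :=
  (choiMatrix Φ).PosSemidef ∧ ∀ ρ : Matrix (Fin a) (Fin a) ℂ, (Φ ρ).trace = ρ.trace

/-- The `n`-fold tensor product map `Φs 0 ⊗ ⋯ ⊗ Φs (n-1)`. -/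
def tensChan {a b : ℕ} (n : ℕ) (Φs : Fin n → QChannelMap a b) (ρ : MatPow a n) :
    MatPow b n :=
  Matrix.of fun y y' => ∑ x : Fin n → Fin a, ∑ x' : Fin n → Fin a,
    ρ x x' * ∏ k, Φs k (Matrix.single (x k) (x' k) 1) (y k) (y' k)

/-- The Markov weight `γ_{i₁} q_{i₁ i₂} ⋯ q_{i_{n-1} i_n}` of a trajectory. -/
def chainWt {I : Type*} (q : I → I → ℝ) (γ : I → ℝ) {n : ℕ} (i : Fin n → I) : ℝ :=
  ∏ k : Fin n, if k.val = 0 then γ (i k)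
    else q (i ⟨k.val - 1, Nat.lt_of_le_of_lt (Nat.pred_le _) k.isLt⟩) (i k)

/-- The memory channel `Φ^{(n)}` with Markovian correlated noise. -/
def memChan {I : Type*} [Fintype I] {a b : ℕ} (q : I → I → ℝ) (γ : I → ℝ)
    (Φ : I → QChannelMap a b) (n : ℕ) (ρ : MatPow a n) : MatPow b n :=
  ∑ i : Fin n → I, chainWt q γ i • tensChan n (fun k => Φ (i k)) ρ

/-- `γ_C = ∑_{i ∈ C} γ_i`. -/
def gammaC {I : Type*} [Fintype I] [DecidableEq I] (γ : I → ℝ) (C : Finset I) : ℝ :=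
  ∑ i ∈ C, γ i

/-- The channel `Φ_C^{(n)}` restricted to the class `C`. -/
def classChan {I : Type*} [Fintype I] [DecidableEq I] {a b : ℕ} (q : I → I → ℝ)
    (γ : I → ℝ) (Φ : I → QChannelMap a b) (C : Finset I) (n : ℕ) (ρ : MatPow a n) :
    MatPow b n :=
  (gammaC γ C)⁻¹ • ∑ i : Fin n → {x // x ∈ C},
    chainWt q γ (fun k => (i k : I)) • tensChan n (fun k => Φ (i k : I)) ρ

/-- The transition matrix of the Markov chain. -/
def qMatrix {I : Type*} [Fintype I] (q : I → I → ℝ) : Matrix I I ℝ := Matrix.of q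

/-- `j` is accessible from `i`. -/
def Accessible {I : Type*} [Fintype I] [DecidableEq I] (q : I → I → ℝ) (i j : I) : Prop :=
  ∃ n : ℕ, 0 < (qMatrix q ^ n) i j

/-- `i` and `j` communicate. -/
def Communicates {I : Type*} [Fintype I] [DecidableEq I] (q : I → I → ℝ) (i j : I) : Prop :=
  Accessible q i j ∧ Accessible q j i

/-- `C` is a communicating class. -/
def IsCommClass {I : Type*} [Fintype I] [DecidableEq I] (q : I → I → ℝ) (C : Finset I) :
    Prop :=
  ∃ i : I, ∀ j, j ∈ C ↔ Communicates q i j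

/-- The class `C` is aperiodic: for each of its states, the gcd of the return
times is `1`. -/
def IsAperiodicClass {I : Type*} [Fintype I] [DecidableEq I] (q : I → I → ℝ)
    (C : Finset I) : Prop :=
  ∀ i ∈ C, ∀ d : ℕ, (∀ n : ℕ, 0 < n → 0 < (qMatrix q ^ n) i i → d ∣ n) → d = 1

/-- The class `C` is a (deterministic) periodic cycle `i₀ → i₁ → ⋯ → i_{L-1} → i₀` of
period `L ≥ 2`, enumerated by the `L`-periodic function `e : ℕ → I`. -/
def IsPeriodicCycle {I : Type*} [Fintype I] [DecidableEq I] (q : I → I → ℝ)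
    (C : Finset I) (L : ℕ) (e : ℕ → I) : Prop :=
  2 ≤ L ∧ (∀ k, e (k + L) = e k) ∧ (∀ j, j ∈ C ↔ ∃ k < L, e k = j) ∧
    (∀ k k', k < L → k' < L → e k = e k' → k = k') ∧ ∀ k, q (e k) (e (k + 1)) = 1

/-- The branch channel `Φ_{C,i_k}^{(n)} = Φ_{i_k} ⊗ Φ_{i_{k+1}} ⊗ ⋯ ⊗ Φ_{i_{k+n-1}}`
of a periodic cycle enumerated by `e`, started at position `k`. -/
def cycleChan {I : Type*} {a b : ℕ} (Φ : I → QChannelMap a b) (e : ℕ → I) (k n : ℕ)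
    (ρ : MatPow a n) : MatPow b n :=
  tensChan n (fun r => Φ (e (k + r.val))) ρ

/-- A finite ensemble of density matrices. -/
def IsEnsemble {m : Type*} [Fintype m] {J : ℕ} (p : Fin J → ℝ)
    (ρ : Fin J → Matrix m m ℂ) : Prop :=
  (∀ j, 0 ≤ p j) ∧ ∑ j, p j = 1 ∧ ∀ j, IsDensity (ρ j)

/-- Mean Holevo quantity of an ensemble for an aperiodic class `C`. -/
def holevoAper {I : Type*} [Fintype I] [DecidableEq I] {a b : ℕ} (q : I → I → ℝ)
    (γ : I → ℝ) (Φ : I → QChannelMap a b) (C : Finset I) (n : ℕ) {J : ℕ}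
    (p : Fin J → ℝ) (ρ : Fin J → MatPow a n) : ℝ :=
  (1 / (n : ℝ)) * (vnEntropy (∑ j, p j • classChan q γ Φ C n (ρ j)) -
    ∑ j, p j * vnEntropy (classChan q γ Φ C n (ρ j)))

/-- Mean Holevo quantity of an ensemble for a periodic cycle of period `L`
enumerated by `e`. -/
def holevoCyc {I : Type*} {a b : ℕ} (Φ : I → QChannelMap a b) (e : ℕ → I) (L n : ℕ)
    {J : ℕ} (p : Fin J → ℝ) (ρ : Fin J → MatPow a n) : ℝ :=
  (1 / ((n : ℝ) * L)) * ∑ k : Fin L,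
    (vnEntropy (cycleChan Φ e k.val n (∑ j, p j • ρ j)) -
      ∑ j, p j * vnEntropy (cycleChan Φ e k.val n (ρ j)))

/-- The mean Holevo quantity `χ̄_C^{(n)}` of a communicating class. -/
def chibarC {I : Type*} [Fintype I] [DecidableEq I] {a b : ℕ} (q : I → I → ℝ)
    (γ : I → ℝ) (Φ : I → QChannelMap a b) (C : Finset I) (n : ℕ) {J : ℕ}
    (p : Fin J → ℝ) (ρ : Fin J → MatPow a n) : ℝ :=
  letI := Classical.propDecidable (∃ L e, IsPeriodicCycle q C L e)
  if h : ∃ L e, IsPeriodicCycle q C L e then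
    holevoCyc Φ h.choose_spec.choose h.choose n p ρ
  else holevoAper q γ Φ C n p ρ

/-- `χ̄_n`: the supremum over ensembles of the minimum over communicating classes
(of positive weight) of the mean Holevo quantities. -/
def chibar {I : Type*} [Fintype I] [DecidableEq I] {a b : ℕ} (q : I → I → ℝ)
    (γ : I → ℝ) (Φ : I → QChannelMap a b) (n : ℕ) : ℝ :=
  sSup {x : ℝ | ∃ (J : ℕ) (p : Fin J → ℝ) (ρ : Fin J → MatPow a n),
    IsEnsemble p ρ ∧
    x = sInf {y : ℝ | ∃ C : Finset I, IsCommClass q C ∧ 0 < gammaC γ C ∧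
      y = chibarC q γ Φ C n p ρ}}

/-- The `n`-use Holevo quantity of the memory channel. -/
def chiN {I : Type*} [Fintype I] {a b : ℕ} (q : I → I → ℝ) (γ : I → ℝ)
    (Φ : I → QChannelMap a b) (n : ℕ) : ℝ :=
  sSup {x : ℝ | ∃ (J : ℕ) (p : Fin J → ℝ) (ρ : Fin J → MatPow a n),
    IsEnsemble p ρ ∧
    x = (1 / (n : ℝ)) * (vnEntropy (∑ j, p j • memChan q γ Φ n (ρ j)) -
      ∑ j, p j * vnEntropy (memChan q γ Φ n (ρ j)))}

/-- A code: densities as codewords and a sub-POVM as decoder. -/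
def IsCode {a b : ℕ} (n N : ℕ) (ρ : Fin N → MatPow a n) (E : Fin N → MatPow b n) : Prop :=
  (∀ k, IsDensity (ρ k)) ∧ (∀ k, (E k).PosSemidef) ∧ Loewner (∑ k, E k) 1

/-- Average probability of error of a code for the memory channel. -/
def avgErr {I : Type*} [Fintype I] {a b : ℕ} (q : I → I → ℝ) (γ : I → ℝ)
    (Φ : I → QChannelMap a b) (n N : ℕ) (ρ : Fin N → MatPow a n)
    (E : Fin N → MatPow b n) : ℝ :=
  (1 / (N : ℝ)) * ∑ k, (1 - ((memChan q γ Φ n (ρ k) * E k).trace).re)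

/-- `R` is an achievable rate for the memory channel. -/
def AchievableRate {I : Type*} [Fintype I] {a b : ℕ} (q : I → I → ℝ) (γ : I → ℝ)
    (Φ : I → QChannelMap a b) (R : ℝ) : Prop :=
  0 ≤ R ∧ ∃ (N : ℕ → ℕ) (ρ : ∀ n, Fin (N n) → MatPow a n)
    (E : ∀ n, Fin (N n) → MatPow b n),
    (∀ n, IsCode n (N n) (ρ n) (E n)) ∧
    (∀ n : ℕ, (2 : ℝ) ^ ((n : ℝ) * R) ≤ (N n : ℝ)) ∧
    Tendsto (fun n => avgErr q γ Φ n (N n) (ρ n) (E n)) atTop (nhds 0)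

/-- The classical capacity: the supremum of achievable rates. -/
def capacity {I : Type*} [Fintype I] {a b : ℕ} (q : I → I → ℝ) (γ : I → ℝ)
    (Φ : I → QChannelMap a b) : ℝ :=
  sSup {R : ℝ | AchievableRate q γ Φ R}

/-- A stochastic matrix. -/
def IsStochastic {I : Type*} [Fintype I] (q : I → I → ℝ) : Prop :=
  (∀ i j, 0 ≤ q i j) ∧ ∀ i, ∑ j, q i j = 1

/-- An invariant probability distribution. -/
def IsInvariantDist {I : Type*} [Fintype I] (q : I → I → ℝ) (γ : I → ℝ) : Prop :=
  (∀ i, 0 ≤ γ i) ∧ ∑ i, γ i = 1 ∧ ∀ j, γ j = ∑ i, γ i * q i j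

/-- The chain is irreducible. -/
def IsIrreducibleChain {I : Type*} [Fintype I] [DecidableEq I] (q : I → I → ℝ) : Prop :=
  ∀ i j, Accessible q i j

/-- The chain is aperiodic. -/
def IsAperiodicChain {I : Type*} [Fintype I] [DecidableEq I] (q : I → I → ℝ) : Prop :=
  ∀ i : I, ∀ d : ℕ, (∀ n : ℕ, 0 < n → 0 < (qMatrix q ^ n) i i → d ∣ n) → d = 1

/-- The index of the `s`-th site of the `r`-th block. -/
def blockIdx {m l : ℕ} (r : Fin m) (s : Fin l) : Fin (m * l) :=
  ⟨r.val * l + s.val, by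
    have h1 := r.isLt
    have h2 := s.isLt
    calc r.val * l + s.val < r.val * l + l := Nat.add_lt_add_left h2 _
      _ = (r.val + 1) * l := by ring
      _ ≤ m * l := Nat.mul_le_mul_right _ h1⟩

/-- The tensor product `ρ 0 ⊗ ρ 1 ⊗ ⋯ ⊗ ρ (m-1)` of `m` states on `l` sites each. -/
def kronFam {d l : ℕ} {m : ℕ} (ρ : Fin m → MatPow d l) : MatPow d (m * l) :=
  Matrix.of fun x x' =>
    ∏ r : Fin m, ρ r (fun s => x (blockIdx r s)) (fun s => x' (blockIdx r s))

/-- The `m`-fold tensor power `ρ^{⊗ m}` of a state on `l` sites. -/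
def kronPow {d l : ℕ} (m : ℕ) (ρ : MatPow d l) : MatPow d (m * l) := kronFam fun _ => ρ

/-- The tensor product `τ 0 ⊗ ⋯ ⊗ τ (n-1)` of single-site states. -/
def kronSites {d n : ℕ} (τ : Fin n → Matrix (Fin d) (Fin d) ℂ) : MatPow d n :=
  Matrix.of fun x x' => ∏ r, τ r (x r) (x' r)

/-- The tensor product of a state on `a` sites and a state on `b` sites. -/
def kron2 {d a b : ℕ} (A : MatPow d a) (B : MatPow d b) : MatPow d (a + b) :=
  Matrix.of fun x x' =>
    A (fun s => x (Fin.castAdd b s)) (fun s => x' (Fin.castAdd b s)) *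
      B (fun t => x (Fin.natAdd a t)) (fun t => x' (Fin.natAdd a t))

/-- `A ⊗ 1 ⊗ B` on `(2m+k)·l` sites, where `A`, `B` act on the first and last `m·l`
sites respectively and the identity acts on the middle `k·l` sites. -/
def threeBlock {d : ℕ} (m k l : ℕ) (A B : MatPow d (m * l)) : MatPow d ((2 * m + k) * l) :=
  Matrix.of fun y y' =>
    A (fun s => y ⟨s.val, by
          have hs := s.isLt
          have h : m * l ≤ (2 * m + k) * l := Nat.mul_le_mul_right _ (by omega)
          omega⟩)
      (fun s => y' ⟨s.val, by
          have hs := s.isLt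
          have h : m * l ≤ (2 * m + k) * l := Nat.mul_le_mul_right _ (by omega)
          omega⟩) *
    (if (fun t : Fin (k * l) => y ⟨m * l + t.val, by
            have ht := t.isLt
            have h : (m + k) * l ≤ (2 * m + k) * l := Nat.mul_le_mul_right _ (by omega)
            have e : (m + k) * l = m * l + k * l := Nat.add_mul _ _ _
            omega⟩) =
        (fun t : Fin (k * l) => y' ⟨m * l + t.val, by
            have ht := t.isLt
            have h : (m + k) * l ≤ (2 * m + k) * l := Nat.mul_le_mul_right _ (by omega)
            have e : (m + k) * l = m * l + k * l := Nat.add_mul _ _ _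
            omega⟩)
      then (1 : ℂ) else 0) *
    B (fun s => y ⟨(m + k) * l + s.val, by
          have hs := s.isLt
          have e : (2 * m + k) * l = (m + k) * l + m * l := by
            rw [show 2 * m + k = (m + k) + m by omega, Nat.add_mul]
          omega⟩)
      (fun s => y' ⟨(m + k) * l + s.val, by
          have hs := s.isLt
          have e : (2 * m + k) * l = (m + k) * l + m * l := by
            rw [show 2 * m + k = (m + k) + m by omega, Nat.add_mul]
          omega⟩)


/-! Since `0 ≤ Q ≤ P` with `P` a projection, `P - Q` and its square root `S` live under `P`:
`S P = P S = S`. Hence `S (P Π P) S = S Π S` and `S σ S = S (P σ P) S ≤ c S² = c (P - Q) ≤ c`,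
and cycling the trace gives `Tr[σ S Π S] = Tr[(S σ S) Π] ≤ c Tr Π`. -/

open scoped MatrixOrder

lemma psqrt_eq_sqrt {m : Type*} [Fintype m] [DecidableEq m] {A : Matrix m m ℂ}
    (hA : A.PosSemidef) : psqrt A = CFC.sqrt A := by
  rw [CFC.sqrt_eq_cfc, cfc_nnreal_eq_real _ A hA.nonneg, hA.1.cfc_eq, psqrt, dif_pos hA]
  simp [IsHermitian.cfc, Function.comp_def, Unitary.conjStarAlgAut_apply, hA.eigenvalues_nonneg]

lemma IsProjection.isStarProjection {m : Type*} [Fintype m] {P : Matrix m m ℂ}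
    (hP : IsProjection P) : IsStarProjection P :=
  ⟨hP.2, hP.1⟩

lemma IsStarProjection.sqrt_mul_right_and_mul_left_of_le {A : Type*} [NonUnitalCStarAlgebra A]
    [PartialOrder A] [StarOrderedRing A] {a e : A} (he : IsStarProjection e) (hae : a ≤ e) :
    CFC.sqrt a * e = CFC.sqrt a ∧ e * CFC.sqrt a = CFC.sqrt a := by
  have hse : CFC.sqrt e = e := (CFC.sqrt_eq_iff e e he.nonneg he.nonneg).2 he.isIdempotentElem.eq
  exact he.mul_right_and_mul_left_of_nonneg_of_le (CFC.sqrt_nonneg a)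
    (hse ▸ CFC.sqrt_le_sqrt a e hae)

lemma IsStarProjection.sqrt_sub_mul_mul_sqrt_sub_le_smul_one {A : Type*} [CStarAlgebra A]
    [PartialOrder A] [StarOrderedRing A] {a e x : A} {c : ℝ} (he : IsStarProjection e)
    (ha : 0 ≤ a) (hae : a ≤ e) (hc : 0 ≤ c) (hx : e * x * e ≤ c • 1) :
    CFC.sqrt (e - a) * x * CFC.sqrt (e - a) ≤ c • 1 := by
  set s := CFC.sqrt (e - a)
  have hs : IsSelfAdjoint s := (CFC.sqrt_nonneg _).isSelfAdjoint
  obtain ⟨hse, hes⟩ := he.sqrt_mul_right_and_mul_left_of_le (sub_le_self e ha)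
  calc s * x * s = (s * e) * x * (e * s) := by rw [hse, hes]
    _ = star s * (e * x * e) * s := by simp only [hs.star_eq, mul_assoc]
    _ ≤ star s * (c • 1) * s := star_left_conjugate_le_conjugate hx s
    _ = c • (e - a) := by
        rw [hs.star_eq, mul_smul_comm, smul_mul_assoc, mul_one,
          CFC.sqrt_mul_sqrt_self _ (sub_nonneg.2 hae)]
    _ ≤ c • 1 := smul_le_smul_of_nonneg_left ((sub_le_self e ha).trans he.le_one) hc

lemma Matrix.re_trace_mul_le_of_le_smul_one {n 𝕜 : Type*} [Fintype n] [DecidableEq n] [RCLike 𝕜]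
    {M p : Matrix n n 𝕜} {c : ℝ} (hM : M ≤ c • 1) (hp : IsStarProjection p) :
    RCLike.re (M * p).trace ≤ c * RCLike.re p.trace := by
  have h := (star_left_conjugate_nonneg (sub_nonneg.2 hM) p).posSemidef.trace_nonneg
  rw [hp.isSelfAdjoint.star_eq, mul_sub, sub_mul, trace_sub, mul_smul_comm, mul_one,
    smul_mul_assoc, hp.isIdempotentElem.eq, trace_smul, trace_mul_cycle, hp.isIdempotentElem.eq,
    trace_mul_comm] at h
  simpa [sub_nonneg, RCLike.smul_re] using (RCLike.nonneg_iff.1 h).1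

theorem feinstein_key_estimate_general {d : ℕ} (σ Q P Pj : Matrix (Fin d) (Fin d) ℂ) (c : ℝ)
    (hQ : Q.PosSemidef) (hP : IsProjection P) (hPj : IsProjection Pj)
    (hQP : Loewner Q P) (hc : 0 ≤ c)
    (hPσP : Loewner (P * σ * P) ((c : ℝ) • (1 : Matrix (Fin d) (Fin d) ℂ))) :
    ((σ * (psqrt (P - Q) * (P * Pj * P) * psqrt (P - Q))).trace).re ≤
      c * (Pj.trace).re := by
  have hP' := hP.isStarProjection
  rw [psqrt_eq_sqrt hQP]
  set S := CFC.sqrt (P - Q)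
  open scoped Matrix.Norms.L2Operator in
  obtain ⟨hSP, hPS⟩ := hP'.sqrt_mul_right_and_mul_left_of_le (sub_le_self P hQ.nonneg)
  have hSσS : S * σ * S ≤ c • 1 := by
    open scoped Matrix.Norms.L2Operator in
    exact hP'.sqrt_sub_mul_mul_sqrt_sub_le_smul_one hQ.nonneg hQP hc hPσP
  have hmid : S * (P * Pj * P) * S = S * Pj * S := by
    rw [← mul_assoc, ← mul_assoc, hSP, mul_assoc, hPS]
  rw [hmid, trace_mul_comm, mul_assoc, trace_mul_comm, ← mul_assoc]
  exact re_trace_mul_le_of_le_smul_one hSσS hPj.isStarProjection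

/-- Key operator estimate in the proof of the Feinstein lemma. -/
theorem feinstein_key_estimate {d : ℕ} (σ Q P Pj : Matrix (Fin d) (Fin d) ℂ) (c : ℝ)
    (hσ : σ.PosSemidef) (hQ : Q.PosSemidef) (hP : IsProjection P) (hPj : IsProjection Pj)
    (hQP : Loewner Q P) (hcomm : Q * P = P * Q) (hc : 0 ≤ c)
    (hPσP : Loewner (P * σ * P) ((c : ℝ) • (1 : Matrix (Fin d) (Fin d) ℂ))) :
    ((σ * (psqrt (P - Q) * (P * Pj * P) * psqrt (P - Q))).trace).re ≤
      c * (Pj.trace).re :=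
  feinstein_key_estimate_general σ Q P Pj c hQ hP hPj hQP hc hPσP

end
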